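/- arXiv:math/0403534 — 2 statements merged into one kernel-verified Lean document; each statement's English description precedes it below -/
import Mathlib

section
/- Let L be a finite meet-distributive meet-semilattice. For each α ∈ L, the set S(α) = ℓ(α) \ ℓ(α') is an antichain in P, and |S(α)| = |N(α)|, the number of lower neighbors of α. -/
open scoped Classical

/-- An element of a poset is *join-irreducible* if it covers exactly one element. -/
def JoinIrred {L : Type*} [Preorder L] (a : L) : Prop := ∃! b : L, b ⋖ a

/-- `ell α = {p ∈ P : p ≤ α}`, the set of join-irreducible elements below `α`. -/
def ell {L : Type*} [Preorder L] (a : L) : Set L := {p | JoinIrred p ∧ p ≤ a}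

/-- The set of join-irreducible elements. -/
def Pset (L : Type*) [Preorder L] : Set L := {p | JoinIrred p}

/-- The set `N(α)` of lower neighbors of `α`, as a finset. -/
noncomputable def NF {L : Type*} [Preorder L] [Fintype L] (a : L) : Finset L :=
  Finset.univ.filter (fun b => b ⋖ a)

/-- `ell` as a finset. -/
noncomputable def ellF {L : Type*} [Preorder L] [Fintype L] (a : L) : Finset L :=
  Finset.univ.filter (fun p => JoinIrred p ∧ p ≤ a)

/-- `α' = ⋀ N(α)`, the meet of all lower neighbors of `α` (with `α' = α` if `N(α) = ∅`). -/
noncomputable def lowMeet {L : Type*} [SemilatticeInf L] [Fintype L] (a : L) : L :=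
  if h : (NF a).Nonempty then (NF a).inf' h id else a

/-- `S(α) = ℓ(α) \ ℓ(α')`. -/
noncomputable def SF {L : Type*} [SemilatticeInf L] [Fintype L] (a : L) : Finset L :=
  ellF a \ ellF (lowMeet a)

/-- An interval `[γ, β]` is Boolean if it is order-isomorphic to some `2^[k]`. -/
def IsBooleanInterval {L : Type*} [Preorder L] (γ β : L) : Prop :=
  ∃ k : ℕ, Nonempty ((Set.Icc γ β) ≃o Set (Fin k))

/-- A poset is meet-distributive if each interval `[γ, β]` such that `γ` is the meet of
the lower neighbors of `β` in `[γ, β]` is Boolean. -/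
def MeetDistributive (L : Type*) [Preorder L] : Prop :=
  ∀ γ β : L, γ ≤ β → IsGLB {x | γ ≤ x ∧ x ⋖ β} γ → IsBooleanInterval γ β

/-- A pair `(A, B)` of subsets of `P` is independent if each `α` with `B ⊆ ℓ(α)`
satisfies `A ∩ ℓ(α) ≠ ∅`. -/
def Indep {L : Type*} [Preorder L] (A B : Set L) : Prop :=
  ∀ α : L, B ⊆ ell α → (A ∩ ell α).Nonempty

/-- `⟨B⟩`, the poset ideal of `P` generated by `B ⊆ P`. -/
def idealGen {L : Type*} [Preorder L] (B : Set L) : Set L :=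
  {p | JoinIrred p ∧ ∃ q ∈ B, p ≤ q}

/-- `M(B)`, the set of maximal elements of `B`. -/
def maxElems {L : Type*} [Preorder L] (B : Set L) : Set L :=
  {b ∈ B | ∀ c ∈ B, b ≤ c → c = b}

/-!
Meet-distributivity forces `|ℓ(α) \ ℓ(β)| = 1` for every cover `β ⋖ α`, by well-founded
induction on `α`. If `α` is not join-irreducible, a minimal element `m` of `[α', α)` above a
given `p ∈ ℓ(α) \ ℓ(β)` is an atom of the Boolean interval `[α', α]`: two lower covers of `m`
would both miss `p`, and by induction each of them misses only `p`, which separation by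
join-irreducibles rules out. All such `p` then share the unique atom not below the coatom `β`,
and by induction that atom adds a single join-irreducible to `ℓ(α')`.

Consequently `S(α)` is the disjoint union of the singletons `ℓ(α) \ ℓ(b)`, `b ∈ N(α)`, and
two of its elements comparable as `p ≤ q` lie in the same singleton.
-/

section PartialOrder

variable {L : Type*} [PartialOrder L]

theorem JoinIrred.le_of_lt [Finite L] {a b p : L} (ha : JoinIrred a) (hb : b ⋖ a) (hp : p < a) :
    p ≤ b := by
  obtain ⟨c, hpc, hc⟩ := exists_le_covBy_of_lt hp
  exact ha.unique hc hb ▸ hpc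

theorem Set.Icc.coe_covBy_coe {γ δ : L} {x y : Set.Icc γ δ} : (x : L) ⋖ y ↔ x ⋖ y :=
  Set.OrdConnected.apply_covBy_apply_iff (OrderEmbedding.subtype (· ∈ Set.Icc γ δ))
    (by rw [OrderEmbedding.coe_subtype, Subtype.range_coe]; exact Set.ordConnected_Icc)

theorem Set.exists_covBy_ne_of_lt_of_not_covBy {α : Type*} {s t : Set α} (hst : s < t)
    (hcov : ¬ s ⋖ t) : ∃ u v, u ⋖ t ∧ v ⋖ t ∧ u ≠ v := by
  obtain ⟨i, hit, his⟩ := Set.exists_of_ssubset hst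
  obtain ⟨j, hjt, hji⟩ : ∃ j ∈ t, j ≠ i := by
    by_contra! hno
    refine hcov (Set.covBy_iff_exists_sdiff_singleton.2 ⟨i, hit, ?_⟩)
    ext x
    refine ⟨fun hx => ?_, fun hx => ⟨hst.le hx, fun hxi => his (hxi ▸ hx)⟩⟩
    by_contra hxs
    exact hx.2 (hno x hx.1)
  exact ⟨t \ {i}, t \ {j}, Set.sdiff_singleton_covBy hit, Set.sdiff_singleton_covBy hjt,
    fun h => (show j ∈ t \ {j} from h ▸ ⟨hjt, hji⟩).2 rfl⟩

theorem le_of_covBy_of_not_le {D : Type*} [DistribLattice D] {g b d x y : D} (hb : b ⋖ d)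
    (hgb : g ≤ b) (hgx : g ≤ x) (hgy : g ⋖ y) (hx : x ≤ d) (hy : y ≤ d) (hxb : ¬ x ≤ b)
    (hyb : ¬ y ≤ b) : y ≤ x := by
  have hxb_sup : x ⊔ b = d := (hb.eq_or_eq le_sup_right (sup_le hx hb.le)).resolve_left
    fun h => hxb (h ▸ le_sup_left)
  have hyb_inf : y ⊓ b = g := (hgy.eq_or_eq (le_inf hgy.le hgb) inf_le_left).resolve_right
    fun h => hyb (h ▸ inf_le_right)
  calc y = y ⊓ d := (inf_eq_left.2 hy).symm
    _ = y ⊓ x ⊔ y ⊓ b := by rw [← hxb_sup, inf_sup_left]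
    _ = y ⊓ x := by rw [hyb_inf, sup_eq_left.2 (le_inf hgy.le hgx)]
    _ ≤ x := inf_le_right

namespace IsBooleanInterval

variable {γ δ : L}

theorem exists_covBy_ne (hB : IsBooleanInterval γ δ) {x : L} (hγx : γ < x) (hxδ : x ≤ δ)
    (hcov : ¬ γ ⋖ x) : ∃ y₁ y₂, γ ≤ y₁ ∧ γ ≤ y₂ ∧ y₁ ⋖ x ∧ y₂ ⋖ x ∧ y₁ ≠ y₂ := by
  obtain ⟨k, ⟨e⟩⟩ := hB
  let g : Set.Icc γ δ := ⟨γ, le_rfl, hγx.le.trans hxδ⟩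
  let x' : Set.Icc γ δ := ⟨x, hγx.le, hxδ⟩
  have hcov' : ¬ e g ⋖ e x' := by rwa [apply_covBy_apply_iff, ← Set.Icc.coe_covBy_coe]
  obtain ⟨u, v, hu, hv, huv⟩ :=
    Set.exists_covBy_ne_of_lt_of_not_covBy (e.strictMono (show g < x' from hγx)) hcov'
  have hpull : ∀ w, w ⋖ e x' → ((e.symm w : Set.Icc γ δ) : L) ⋖ x := fun w hw => by
    show ((e.symm w : Set.Icc γ δ) : L) ⋖ (x' : L)
    rwa [Set.Icc.coe_covBy_coe, ← apply_covBy_apply_iff e, e.apply_symm_apply]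
  exact ⟨e.symm u, e.symm v, (e.symm u).2.1, (e.symm v).2.1, hpull u hu, hpull v hv,
    fun h => huv (e.symm.injective (Subtype.ext h))⟩

theorem eq_of_covBy_of_not_le (hB : IsBooleanInterval γ δ) {β x₁ x₂ : L} (hβ : β ⋖ δ)
    (hγβ : γ ≤ β) (h₁ : γ ⋖ x₁) (h₂ : γ ⋖ x₂) (hx₁ : x₁ ≤ δ) (hx₂ : x₂ ≤ δ) (hn₁ : ¬ x₁ ≤ β)
    (hn₂ : ¬ x₂ ≤ β) : x₁ = x₂ := by
  obtain ⟨k, ⟨e⟩⟩ := hB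
  have hγδ : γ ≤ δ := hγβ.trans hβ.le
  let G : Set.Icc γ δ := ⟨γ, le_rfl, hγδ⟩
  let B : Set.Icc γ δ := ⟨β, hγβ, hβ.le⟩
  let D : Set.Icc γ δ := ⟨δ, hγδ, le_rfl⟩
  let X₁ : Set.Icc γ δ := ⟨x₁, h₁.le, hx₁⟩
  let X₂ : Set.Icc γ δ := ⟨x₂, h₂.le, hx₂⟩
  have hcov : ∀ a b : Set.Icc γ δ, (a : L) ⋖ b → e a ⋖ e b := fun _ _ h =>
    (apply_covBy_apply_iff e).2 (Set.Icc.coe_covBy_coe.1 h)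
  have hle : ∀ a b : Set.Icc γ δ, (a : L) ≤ b → e a ≤ e b := fun _ _ h => e.monotone h
  have hnle : ∀ a b : Set.Icc γ δ, ¬ (a : L) ≤ b → ¬ e a ≤ e b := fun _ _ h h' =>
    h (e.le_iff_le.1 h')
  have h₂₁ : e X₂ ≤ e X₁ := le_of_covBy_of_not_le (hcov B D hβ) (hle G B hγβ) (hle G X₁ h₁.le)
    (hcov G X₂ h₂) (hle X₁ D hx₁) (hle X₂ D hx₂) (hnle X₁ B hn₁) (hnle X₂ B hn₂)
  have h₁₂ : e X₁ ≤ e X₂ := le_of_covBy_of_not_le (hcov B D hβ) (hle G B hγβ) (hle G X₂ h₂.le)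
    (hcov G X₁ h₁) (hle X₂ D hx₂) (hle X₁ D hx₁) (hnle X₂ B hn₂) (hnle X₁ B hn₁)
  exact congrArg Subtype.val (e.injective (le_antisymm h₁₂ h₂₁))

end IsBooleanInterval

end PartialOrder

section SemilatticeInf

variable {L : Type*} [SemilatticeInf L]

theorem exists_joinIrred_le_not_le [Finite L] {x y : L} (h : ¬ x ≤ y) :
    ∃ p, JoinIrred p ∧ p ≤ x ∧ ¬ p ≤ y := by
  induction x using WellFoundedLT.induction with
  | _ x IH =>
  by_cases hb : ∃ b, b ⋖ x ∧ ¬ b ≤ y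
  · obtain ⟨b, hbx, hby⟩ := hb
    obtain ⟨p, hp, hpb, hpy⟩ := IH b hbx.lt hby
    exact ⟨p, hp, hpb.trans hbx.le, hpy⟩
  · push Not at hb
    have hlt : x ⊓ y < x := inf_le_left.lt_of_ne fun he => h (he ▸ inf_le_right)
    -- every lower cover of `x` lies in `[x ⊓ y, x)`, so `x ⊓ y` is the only one
    have hcov : ∀ b, b ⋖ x → b = x ⊓ y := fun b hbx =>
      ((hbx.eq_or_eq (le_inf hbx.le (hb b hbx)) inf_le_left).resolve_right hlt.ne).symm
    obtain ⟨c, -, hcx⟩ := exists_le_covBy_of_lt hlt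
    exact ⟨x, ⟨x ⊓ y, hcov c hcx ▸ hcx, hcov⟩, le_rfl, h⟩

variable [Fintype L]

theorem mem_NF {a b : L} : b ∈ NF a ↔ b ⋖ a := by simp [NF]

theorem mem_ellF_sdiff {a b p : L} : p ∈ ellF a \ ellF b ↔ JoinIrred p ∧ p ≤ a ∧ ¬ p ≤ b := by
  simp only [ellF, Finset.mem_sdiff, Finset.mem_filter, Finset.mem_univ, true_and]
  tauto

theorem lowMeet_le {a b : L} (hb : b ⋖ a) : lowMeet a ≤ b := by
  rw [lowMeet, dif_pos ⟨b, mem_NF.2 hb⟩]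
  exact Finset.inf'_le id (mem_NF.2 hb)

theorem le_lowMeet_iff {a p : L} (hp : p ≤ a) : p ≤ lowMeet a ↔ ∀ b, b ⋖ a → p ≤ b := by
  unfold lowMeet
  split_ifs with hN
  · simp [Finset.le_inf'_iff, mem_NF]
  · simp only [Finset.not_nonempty_iff_eq_empty, Finset.eq_empty_iff_forall_notMem, mem_NF] at hN
    simp [hp, hN]

theorem MeetDistributive.isBooleanInterval_lowMeet (hMD : MeetDistributive L) {a b : L}
    (hb : b ⋖ a) : IsBooleanInterval (lowMeet a) a := by
  refine hMD _ _ ((lowMeet_le hb).trans hb.le) ⟨fun _ hx => hx.1, fun c hc => ?_⟩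
  have hca : c ≤ a := (hc ⟨lowMeet_le hb, hb⟩).trans hb.le
  exact (le_lowMeet_iff hca).2 fun y hy => hc ⟨lowMeet_le hy, hy⟩

theorem SF_eq_biUnion (a : L) : SF a = (NF a).biUnion fun b => ellF a \ ellF b := by
  ext p
  simp only [SF, Finset.mem_biUnion, mem_ellF_sdiff, mem_NF]
  constructor
  · rintro ⟨hp, hpa, hpa'⟩
    obtain ⟨b, hb, hpb⟩ : ∃ b, b ⋖ a ∧ ¬ p ≤ b := by
      simpa using mt (le_lowMeet_iff hpa).2 hpa'
    exact ⟨b, hb, hp, hpa, hpb⟩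
  · rintro ⟨b, hb, hp, hpa, hpb⟩
    exact ⟨hp, hpa, fun h => hpb (h.trans (lowMeet_le hb))⟩

theorem eq_of_covBy_of_mem_ellF_sdiff {m y₁ y₂ p : L} (h₁ : y₁ ⋖ m) (h₂ : y₂ ⋖ m)
    (hp₁ : p ∈ ellF m \ ellF y₁) (hp₂ : p ∈ ellF m \ ellF y₂)
    (hcard : (ellF m \ ellF y₂).card ≤ 1) : y₁ = y₂ := by
  have hle : y₁ ≤ y₂ := by
    by_contra hn
    obtain ⟨r, hr, hry₁, hry₂⟩ := exists_joinIrred_le_not_le hn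
    have hrp : r = p :=
      Finset.card_le_one.1 hcard r (mem_ellF_sdiff.2 ⟨hr, hry₁.trans h₁.le, hry₂⟩) p hp₂
    exact (mem_ellF_sdiff.1 hp₁).2.2 (hrp ▸ hry₁)
  exact ((h₁.eq_or_eq hle h₂.le).resolve_right h₂.lt.ne).symm

theorem MeetDistributive.exists_lowMeet_covBy_ge (hMD : MeetDistributive L) {α β p : L}
    (IH : ∀ m < α, ∀ y, y ⋖ m → (ellF m \ ellF y).card = 1) (hβ : β ⋖ α)
    (hp : JoinIrred p) (hpα : p < α) (hpβ : ¬ p ≤ β) : ∃ m, lowMeet α ⋖ m ∧ p ≤ m ∧ m < α := by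
  obtain ⟨z, hpz, hz⟩ := exists_le_covBy_of_lt hpα
  obtain ⟨m, ⟨hα'm, hpm, hmα⟩, hmin⟩ :=
    (Set.toFinite {x | lowMeet α ≤ x ∧ p ≤ x ∧ x < α}).exists_minimal
      ⟨z, lowMeet_le hz, hpz, hz.lt⟩
  refine ⟨m, ?_, hpm, hmα⟩
  by_contra hcov
  have hα'm_lt : lowMeet α < m :=
    hα'm.lt_of_ne fun h => hpβ (hpm.trans (h ▸ lowMeet_le hβ))
  obtain ⟨y₁, y₂, hy₁, hy₂, hy₁m, hy₂m, hne⟩ :=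
    (hMD.isBooleanInterval_lowMeet hβ).exists_covBy_ne hα'm_lt hmα.le hcov
  have hmem : ∀ y, lowMeet α ≤ y → y ⋖ m → p ∈ ellF m \ ellF y := fun y hy hym =>
    mem_ellF_sdiff.2 ⟨hp, hpm, fun hpy => hym.lt.not_ge (hmin ⟨hy, hpy, hym.lt.trans hmα⟩ hym.le)⟩
  exact hne (eq_of_covBy_of_mem_ellF_sdiff hy₁m hy₂m (hmem y₁ hy₁ hy₁m) (hmem y₂ hy₂ hy₂m)
    (IH m hmα y₂ hy₂m).le)

theorem MeetDistributive.card_ellF_sdiff_of_covBy (hMD : MeetDistributive L) {α β : L}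
    (hβ : β ⋖ α) : (ellF α \ ellF β).card = 1 := by
  induction α using WellFoundedLT.induction generalizing β with
  | _ α IH =>
  refine le_antisymm (Finset.card_le_one.2 fun p hp q hq => ?_) ?_
  · by_cases hα : JoinIrred α
    · have hall : ∀ r ∈ ellF α \ ellF β, r = α := fun r hr => by
        obtain ⟨-, hrα, hrβ⟩ := mem_ellF_sdiff.1 hr
        exact hrα.eq_of_not_lt fun h => hrβ (hα.le_of_lt hβ h)
      exact (hall p hp).trans (hall q hq).symm
    · have hatom : ∀ r ∈ ellF α \ ellF β,
          ∃ m, lowMeet α ⋖ m ∧ m < α ∧ ¬ m ≤ β ∧ r ∈ ellF m \ ellF (lowMeet α) := by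
        intro r hr
        obtain ⟨hr, hrα_le, hrβ⟩ := mem_ellF_sdiff.1 hr
        have hrα : r < α := hrα_le.lt_of_ne fun h => hα (h ▸ hr)
        obtain ⟨m, hm, hrm, hmα⟩ :=
          hMD.exists_lowMeet_covBy_ge (fun m hm _ hy => IH m hm hy) hβ hr hrα hrβ
        exact ⟨m, hm, hmα, fun h => hrβ (hrm.trans h),
          mem_ellF_sdiff.2 ⟨hr, hrm, fun h => hrβ (h.trans (lowMeet_le hβ))⟩⟩
      obtain ⟨m, hm, hmα, hmβ, hpm⟩ := hatom p hp
      obtain ⟨n, hn, hnα, hnβ, hqn⟩ := hatom q hq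
      have hmn : m = n := (hMD.isBooleanInterval_lowMeet hβ).eq_of_covBy_of_not_le hβ
        (lowMeet_le hβ) hm hn hmα.le hnα.le hmβ hnβ
      exact Finset.card_le_one.1 (IH m hmα hm).le p hpm q (hmn ▸ hqn)
  · obtain ⟨p, hp, hpα, hpβ⟩ := exists_joinIrred_le_not_le hβ.lt.not_ge
    exact Finset.card_pos.2 ⟨p, mem_ellF_sdiff.2 ⟨hp, hpα, hpβ⟩⟩

end SemilatticeInf

/-- `S(α)` is an antichain in `P` and `|S(α)| = |N(α)|`. -/
theorem S_antichain_card {L : Type*} [SemilatticeInf L] [Fintype L]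
    (h : MeetDistributive L) (α : L) :
    IsAntichain (· ≤ ·) (↑(SF α) : Set L) ∧ (SF α).card = (NF α).card := by
  have hone : ∀ b ∈ NF α, (ellF α \ ellF b).card = 1 := fun b hb =>
    h.card_ellF_sdiff_of_covBy (mem_NF.1 hb)
  have hdisj : (NF α : Set L).PairwiseDisjoint fun b => ellF α \ ellF b := by
    intro b₁ hb₁ b₂ hb₂ hne
    refine Finset.disjoint_left.2 fun p hp₁ hp₂ => hne ?_
    exact eq_of_covBy_of_mem_ellF_sdiff (mem_NF.1 hb₁) (mem_NF.1 hb₂) hp₁ hp₂ (hone b₂ hb₂).le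
  refine ⟨fun p hp q hq hpq hle => ?_, ?_⟩
  · rw [Finset.mem_coe, SF_eq_biUnion, Finset.mem_biUnion] at hp hq
    obtain ⟨b, hb, hpb⟩ := hp
    obtain ⟨_, -, hqc⟩ := hq
    obtain ⟨-, -, hpb'⟩ := mem_ellF_sdiff.1 hpb
    obtain ⟨hq, hqα, -⟩ := mem_ellF_sdiff.1 hqc
    have hqb : q ∈ ellF α \ ellF b := mem_ellF_sdiff.2 ⟨hq, hqα, fun h => hpb' (hle.trans h)⟩
    exact hpq (Finset.card_le_one.1 (hone b hb).le p hpb q hqb)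
  · rw [SF_eq_biUnion, Finset.card_biUnion hdisj, Finset.sum_congr rfl hone,
      Finset.card_eq_sum_ones]
end

section
/- Let L be a finite meet-distributive meet-semilattice. Then the collection {S(α) : α ∈ L} is a simplicial complex on P; that is, it is closed under taking subsets: if T ⊆ S(α) for some α ∈ L, then T = S(β) for some β ∈ L. -/
open scoped Classical

/-!
When `α` has a lower cover, the interval `[α', α]` is Boolean and its coatoms are exactly the
lower covers of `α`. If `p ≤ α` is join-irreducible and `m` is the least element of `[α', α]` above
`p`, the covers of `α` not above `p` are the coatoms not above `m`. Induction on `α`, passing from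
`α` to `m`, shows that exactly one lower cover `γ` of `α` is not above a given `p ∈ S(α)`, and that
no other element of `S(α)` avoids `γ`; hence `S(α) \ {p} ⊆ S(γ)`. Removing the elements of
`S(α) \ T` one at a time reaches `T` as some `S(β)`.
-/

section JoinIrred

variable {L : Type*} [PartialOrder L] {p q γ δ : L}

theorem JoinIrred.eq_of_covBy (hp : JoinIrred p) (hγ : γ ⋖ p) (hδ : δ ⋖ p) : γ = δ :=
  hp.unique hγ hδ

theorem JoinIrred.le_of_covBy_of_lt [Finite L] (hp : JoinIrred p) (hγ : γ ⋖ p) (hq : q < p) :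
    q ≤ γ := by
  obtain ⟨c, hqc, hcp⟩ := exists_le_covBy_of_lt hq
  exact hp.eq_of_covBy hcp hγ ▸ hqc

end JoinIrred

theorem Set.Icc.coe_covBy_coe_s8 {L : Type*} [PartialOrder L] {a b : L} {x y : Set.Icc a b} :
    (x : L) ⋖ y ↔ x ⋖ y :=
  Set.OrdConnected.apply_covBy_apply_iff (OrderEmbedding.subtype (· ∈ Set.Icc a b))
    (by simpa only [OrderEmbedding.coe_subtype, Subtype.range_coe_subtype, Set.ofPred_mem_eq]
      using Set.ordConnected_Icc)

theorem Set.covBy_univ_iff {ι : Type*} {s : Set ι} : s ⋖ Set.univ ↔ ∃ i, s = {i}ᶜ := by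
  simp [Set.covBy_iff_exists_sdiff_singleton, Set.compl_eq_univ_sdiff, eq_comm]

section BooleanInterval

variable {L ι : Type*} [PartialOrder L] {a b : L} (e : Set.Icc a b ≃o Set ι) {s t : Set ι}

theorem OrderIso.coe_symm_le_coe_symm : (e.symm s : L) ≤ e.symm t ↔ s ⊆ t :=
  e.symm.le_iff_le

theorem OrderIso.coe_symm_covBy_coe_symm : (e.symm s : L) ⋖ e.symm t ↔ s ⋖ t :=
  Set.Icc.coe_covBy_coe_s8.trans (apply_covBy_apply_iff e.symm)

theorem OrderIso.coe_symm_inj : (e.symm s : L) = e.symm t ↔ s = t :=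
  Subtype.coe_inj.trans e.symm.injective.eq_iff

theorem OrderIso.exists_eq_coe_symm {x : L} (hx : x ∈ Set.Icc a b) : ∃ s, x = e.symm s :=
  ⟨e ⟨x, hx⟩, by simp⟩

theorem OrderIso.coe_symm_top : (e.symm ⊤ : L) = b :=
  have hab : a ≤ b := (e.symm ⊤).2.1.trans (e.symm ⊤).2.2
  le_antisymm (e.symm ⊤).2.2 ((e.le_symm_apply (x := ⟨b, hab, le_rfl⟩)).2 le_top)

theorem OrderIso.coe_symm_bot : (e.symm ⊥ : L) = a :=
  have hab : a ≤ b := (e.symm ⊥).2.1.trans (e.symm ⊥).2.2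
  le_antisymm ((e.symm_apply_le (x := ⟨a, le_rfl, hab⟩)).2 bot_le) (e.symm ⊥).2.1

theorem OrderIso.exists_eq_coe_symm_compl_singleton {γ : L} (ha : a ≤ γ) (hγ : γ ⋖ b) :
    ∃ i, γ = e.symm {i}ᶜ := by
  obtain ⟨s, rfl⟩ := e.exists_eq_coe_symm ⟨ha, hγ.le⟩
  have hs : s ⋖ ⊤ := e.coe_symm_covBy_coe_symm.1 (by rwa [e.coe_symm_top])
  obtain ⟨i, rfl⟩ := Set.covBy_univ_iff.1 hs
  exact ⟨i, rfl⟩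

theorem OrderIso.coe_symm_compl_singleton_covBy (i : ι) : (e.symm {i}ᶜ : L) ⋖ b := by
  convert e.coe_symm_covBy_coe_symm.2 (Set.covBy_univ_iff.2 ⟨i, rfl⟩)
  exact e.coe_symm_top.symm

end BooleanInterval

theorem exists_least_mem_Icc_ge {L : Type*} [SemilatticeInf L] [Finite L] {a b p : L}
    (hab : a ≤ b) (hpb : p ≤ b) :
    ∃ m ∈ Set.Icc a b, p ≤ m ∧ ∀ x ∈ Set.Icc a b, p ≤ x → m ≤ x := by
  have : Fintype L := Fintype.ofFinite L
  let S := Finset.univ.filter fun x => x ∈ Set.Icc a b ∧ p ≤ x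
  have hbS : b ∈ S := by simp [S, hab, hpb]
  refine ⟨S.inf' ⟨b, hbS⟩ id, ⟨?_, S.inf'_le id hbS⟩, ?_,
    fun x hx hpx => S.inf'_le id (Finset.mem_filter.2 ⟨Finset.mem_univ x, hx, hpx⟩)⟩
  · exact Finset.le_inf' _ id fun x hx => (Finset.mem_filter.1 hx).2.1.1
  · exact Finset.le_inf' _ id fun x hx => (Finset.mem_filter.1 hx).2.2

/-- `e.symm s` is the least element of `[a, b]` above `p`. -/
theorem OrderIso.exists_le_coe_symm_iff {L ι : Type*} [SemilatticeInf L] [Finite L] {a b p : L}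
    (e : Set.Icc a b ≃o Set ι) (hpb : p ≤ b) : ∃ s, ∀ t, p ≤ e.symm t ↔ s ⊆ t := by
  obtain ⟨m, hm, hpm, hleast⟩ :=
    exists_least_mem_Icc_ge ((e.symm ⊤).2.1.trans (e.symm ⊤).2.2) hpb
  refine ⟨e ⟨m, hm⟩, fun t => ⟨fun hpt => ?_, fun hmt => ?_⟩⟩
  · exact e.le_symm_apply.1 (hleast _ (e.symm t).2 hpt)
  · exact hpm.trans (e.le_symm_apply.2 hmt)

section LowMeet

variable {L : Type*} [SemilatticeInf L] [Fintype L] {α γ p q : L}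

@[simp]
theorem mem_NF_s8 : γ ∈ NF α ↔ γ ⋖ α := by
  simp [NF]

theorem lowMeet_le_of_covBy (hγ : γ ⋖ α) : lowMeet α ≤ γ := by
  rw [lowMeet, dif_pos ⟨γ, mem_NF_s8.2 hγ⟩]
  exact Finset.inf'_le id (mem_NF_s8.2 hγ)

theorem le_lowMeet_of_covBy (hγ : γ ⋖ α) (hp : ∀ δ, δ ⋖ α → p ≤ δ) : p ≤ lowMeet α := by
  rw [lowMeet, dif_pos ⟨γ, mem_NF_s8.2 hγ⟩]
  exact Finset.le_inf' _ id fun δ hδ => hp δ (mem_NF_s8.1 hδ)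

theorem isGLB_lowMeet (hγ : γ ⋖ α) : IsGLB {x | lowMeet α ≤ x ∧ x ⋖ α} (lowMeet α) :=
  ⟨fun _ hx => hx.1, fun _ hp =>
    le_lowMeet_of_covBy hγ fun _ hδ => hp ⟨lowMeet_le_of_covBy hδ, hδ⟩⟩

theorem exists_covBy_not_ge (hpα : p ≤ α) (hp : ¬p ≤ lowMeet α) : ∃ γ, γ ⋖ α ∧ ¬p ≤ γ := by
  by_contra! hall
  by_cases hN : (NF α).Nonempty
  · obtain ⟨γ, hγ⟩ := hN
    exact hp (le_lowMeet_of_covBy (mem_NF_s8.1 hγ) hall)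
  · rw [lowMeet, dif_neg hN] at hp
    exact hp hpα

theorem mem_SF : q ∈ SF α ↔ JoinIrred q ∧ q ≤ α ∧ ¬q ≤ lowMeet α := by
  simp only [SF, ellF, Finset.mem_sdiff, Finset.mem_filter, Finset.mem_univ, true_and]
  tauto

theorem OrderIso.coe_symm_lt_of_lt {ι : Type*} (e : Set.Icc (lowMeet α) α ≃o Set ι) {s : Set ι}
    (hs : ∀ t, p ≤ e.symm t ↔ s ⊆ t) (hpα : p < α) : (e.symm s : L) < α := by
  obtain ⟨c, hpc, hc⟩ := exists_le_covBy_of_lt hpα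
  obtain ⟨j, rfl⟩ := e.exists_eq_coe_symm_compl_singleton (lowMeet_le_of_covBy hc) hc
  exact (e.coe_symm_le_coe_symm.2 ((hs _).1 hpc)).trans_lt hc.lt

end LowMeet

namespace MeetDistributive

variable {L : Type*} [SemilatticeInf L] [Fintype L] (h : MeetDistributive L)
include h

theorem exists_orderIso_Icc_lowMeet {α γ : L} (hγ : γ ⋖ α) :
    ∃ k : ℕ, Nonempty (Set.Icc (lowMeet α) α ≃o Set (Fin k)) :=
  h _ _ ((lowMeet_le_of_covBy hγ).trans hγ.le) (isGLB_lowMeet hγ)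

theorem subsingleton_covBy_not_ge {p : L} (hp : JoinIrred p) :
    ∀ α, p ≤ α → {γ | γ ⋖ α ∧ ¬p ≤ γ}.Subsingleton := by
  intro α
  induction α using WellFoundedLT.induction with
  | _ α ih =>
  rintro hpα γ₁ ⟨hγ₁, hpγ₁⟩ γ₂ ⟨hγ₂, hpγ₂⟩
  rcases hpα.eq_or_lt with rfl | hpα
  · exact hp.eq_of_covBy hγ₁ hγ₂
  obtain ⟨k, ⟨e⟩⟩ := h.exists_orderIso_Icc_lowMeet hγ₁
  obtain ⟨s, hs⟩ := e.exists_le_coe_symm_iff hpα.le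
  have index : ∀ γ, γ ⋖ α → ¬p ≤ γ → ∃ i ∈ s, γ = e.symm {i}ᶜ := by
    intro γ hγ hpγ
    obtain ⟨i, rfl⟩ := e.exists_eq_coe_symm_compl_singleton (lowMeet_le_of_covBy hγ) hγ
    rw [hs, Set.subset_compl_singleton_iff, not_not] at hpγ
    exact ⟨i, hpγ, rfl⟩
  obtain ⟨i₁, hi₁, rfl⟩ := index γ₁ hγ₁ hpγ₁
  obtain ⟨i₂, hi₂, rfl⟩ := index γ₂ hγ₂ hpγ₂
  by_contra hne
  have hi : i₁ ≠ i₂ := by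
    rintro rfl
    exact hne rfl
  -- the least element `e.symm s` of `[α', α]` above `p` then has two lower covers not above `p`
  have hcov : ∀ i ∈ s, (e.symm (s \ {i}) : L) ∈ {γ : L | γ ⋖ e.symm s ∧ ¬p ≤ γ} := fun i hi =>
    ⟨e.coe_symm_covBy_coe_symm.2 (Set.sdiff_singleton_covBy hi),
      fun hpi => ((hs _).1 hpi hi).2 rfl⟩
  have heq := ih _ (e.coe_symm_lt_of_lt hs hpα) ((hs s).2 subset_rfl) (hcov i₁ hi₁) (hcov i₂ hi₂)
  rw [e.coe_symm_inj] at heq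
  exact (heq ▸ ⟨hi₁, hi⟩ : i₁ ∈ s \ {i₁}).2 rfl

theorem subsingleton_joinIrred_not_le (α : L) :
    ∀ γ, γ ⋖ α → {p | JoinIrred p ∧ p ≤ α ∧ ¬p ≤ γ}.Subsingleton := by
  induction α using WellFoundedLT.induction with
  | _ α ih =>
  rintro γ hγ p ⟨hp, hpα, hpγ⟩ q ⟨hq, hqα, hqγ⟩
  rcases hpα.eq_or_lt with rfl | hpα
  · by_contra hne
    exact hqγ (hp.le_of_covBy_of_lt hγ (hqα.lt_of_ne (Ne.symm hne)))
  rcases hqα.eq_or_lt with rfl | hqα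
  · exact (hpγ (hq.le_of_covBy_of_lt hγ hpα)).elim
  obtain ⟨k, ⟨e⟩⟩ := h.exists_orderIso_Icc_lowMeet hγ
  obtain ⟨i₀, rfl⟩ := e.exists_eq_coe_symm_compl_singleton (lowMeet_le_of_covBy hγ) hγ
  -- by uniqueness of the avoided cover, the least element of `[α', α]` above `r` is an atom
  have atom : ∀ r, JoinIrred r → r ≤ α → ¬r ≤ e.symm {i₀}ᶜ → ∀ t, r ≤ e.symm t ↔ {i₀} ⊆ t := by
    intro r hr hrα hrγ
    obtain ⟨s, hs⟩ := e.exists_le_coe_symm_iff hrα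
    suffices s = {i₀} from this ▸ hs
    refine Set.eq_singleton_iff_unique_mem.2 ⟨?_, fun j hj => ?_⟩
    · by_contra hi
      exact hrγ ((hs _).2 (Set.subset_compl_singleton_iff.2 hi))
    · have heq := h.subsingleton_covBy_not_ge hr α hrα
        ⟨e.coe_symm_compl_singleton_covBy j, fun hrj => (hs _).1 hrj hj rfl⟩ ⟨hγ, hrγ⟩
      rwa [e.coe_symm_inj, compl_inj_iff, Set.singleton_eq_singleton_iff] at heq
  have hp' := atom p hp hpα.le hpγ
  have hq' := atom q hq hqα.le hqγ
  have hcov : lowMeet α ⋖ e.symm {i₀} := by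
    convert e.coe_symm_covBy_coe_symm.2 (Set.empty_covBy_singleton i₀)
    exact e.coe_symm_bot.symm
  have hlow : ∀ r : L, ¬r ≤ e.symm {i₀}ᶜ → ¬r ≤ lowMeet α := fun r hr hle =>
    hr (hle.trans (lowMeet_le_of_covBy hγ))
  exact ih _ (e.coe_symm_lt_of_lt hp' hpα) _ hcov ⟨hp, (hp' _).2 subset_rfl, hlow p hpγ⟩
    ⟨hq, (hq' _).2 subset_rfl, hlow q hqγ⟩

theorem exists_covBy_SF_erase_subset {α p : L} (hp : p ∈ SF α) :
    ∃ γ, γ ⋖ α ∧ (SF α).erase p ⊆ SF γ := by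
  obtain ⟨hpJ, hpα, hpα'⟩ := mem_SF.1 hp
  obtain ⟨γ, hγ, hpγ⟩ := exists_covBy_not_ge hpα hpα'
  refine ⟨γ, hγ, fun q hq => ?_⟩
  obtain ⟨hqp, hqS⟩ := Finset.mem_erase.1 hq
  obtain ⟨hqJ, hqα, hqα'⟩ := mem_SF.1 hqS
  have hqγ : q ≤ γ := by
    by_contra hqγ
    exact hqp (h.subsingleton_joinIrred_not_le α γ hγ ⟨hqJ, hqα, hqγ⟩ ⟨hpJ, hpα, hpγ⟩)
  refine mem_SF.2 ⟨hqJ, hqγ, fun hqγ' => hqα' ?_⟩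
  -- `γ'` lies below every coatom of the Boolean interval `[α', γ]`, and these meet in `α'`
  obtain ⟨k, ⟨e⟩⟩ := h.exists_orderIso_Icc_lowMeet hγ
  obtain ⟨i₀, rfl⟩ := e.exists_eq_coe_symm_compl_singleton (lowMeet_le_of_covBy hγ) hγ
  obtain ⟨s, hs⟩ := e.exists_le_coe_symm_iff hqα
  have hs_empty : s = ∅ := by
    refine Set.eq_empty_of_forall_notMem fun j hj => ?_
    have hcov : (e.symm ({i₀}ᶜ \ {j}) : L) ⋖ e.symm {i₀}ᶜ :=
      e.coe_symm_covBy_coe_symm.2 (Set.sdiff_singleton_covBy ((hs _).1 hqγ hj))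
    exact ((hs _).1 (hqγ'.trans (lowMeet_le_of_covBy hcov)) hj).2 rfl
  rw [← e.coe_symm_bot]
  exact (hs ⊥).2 hs_empty.le

end MeetDistributive

/-- `{S(α) : α ∈ L}` is a simplicial complex, i.e. closed under subsets. -/
theorem S_simplicialComplex {L : Type*} [SemilatticeInf L] [Fintype L]
    (h : MeetDistributive L) :
    ∀ α : L, ∀ T ⊆ SF α, ∃ β : L, T = SF β := by
  intro α
  induction α using WellFoundedLT.induction with
  | _ α ih =>
  intro T hT
  rcases hT.eq_or_ssubset with rfl | hTα
  · exact ⟨α, rfl⟩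
  obtain ⟨p, hpα, hpT⟩ := Finset.exists_of_ssubset hTα
  obtain ⟨γ, hγ, hsub⟩ := h.exists_covBy_SF_erase_subset hpα
  exact ih γ hγ.lt T ((Finset.subset_erase.2 ⟨hT, hpT⟩).trans hsub)
end
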